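/- arXiv:1308.3250 — 5 statements merged into one kernel-verified Lean document; each statement's English description precedes it below -/
import Mathlib

section
/- For |q|<1 and parameters μ, ν, the three-parameter q-binomial identity holds: ∑_{m=0}^{n} μ^m (ν/μ;q)_m (μ;q)_{n-m} [n choose m]_q = (ν;q)_n, where (a;q)_k denotes the q-Pochhammer symbol and [n choose m]_q = (q;q)_n/((q;q)_m (q;q)_{n-m}) is the q-binomial coefficient. -/
/-- The q-Pochhammer symbol `(a;q)_n = ∏_{k=0}^{n-1} (1 - a q^k)`. -/
noncomputable def qPoch (a q : ℂ) (n : ℕ) : ℂ := ∏ k ∈ Finset.range n, (1 - a * q ^ k)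

/-!
Put `a = ν / μ` and `b = μ`, so that `ν = a b`. Defining the Gaussian binomial coefficients by the
q-Pascal rule `[n+1, m+1] = [n, m+1] + q^{n-m} [n, m]`, one proves
`(ab;q)_n = ∑_m [n m]_q b^m (a;q)_m (b;q)_{n-m}` by induction on `n`: after applying the Pascal
rule, the two contributions to each `[n m]_q` add up to `1 - ab q^n` times the `n`-th summand.
The same rule gives `(q;q)_m (q;q)_{n-m} [n m]_q = (q;q)_n`, so the quotient in the statement is
`[n m]_q` whenever the q-factorials do not vanish.
-/

open Finset

@[simp]
lemma qPoch_zero (a q : ℂ) : qPoch a q 0 = 1 := by simp [qPoch]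

lemma qPoch_succ (a q : ℂ) (n : ℕ) :
    qPoch a q (n + 1) = qPoch a q n * (1 - a * q ^ n) :=
  prod_range_succ _ n

def qBinom (q : ℂ) : ℕ → ℕ → ℂ
  | _, 0 => 1
  | 0, _ + 1 => 0
  | n + 1, k + 1 => qBinom q n (k + 1) + q ^ (n - k) * qBinom q n k

lemma qBinom_eq_zero_of_lt (q : ℂ) {n k : ℕ} (h : n < k) : qBinom q n k = 0 := by
  induction n generalizing k with
  | zero => obtain ⟨k, rfl⟩ := Nat.exists_eq_succ_of_ne_zero h.ne'; rfl
  | succ n ih =>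
    obtain ⟨k, rfl⟩ := Nat.exists_eq_succ_of_ne_zero (Nat.ne_zero_of_lt h)
    simp only [qBinom, ih (by omega : n < k + 1), ih (by omega : n < k), mul_zero, add_zero]

lemma qPoch_mul_qPoch_mul_qBinom (q : ℂ) {n k : ℕ} (hk : k ≤ n) :
    qPoch q q k * qPoch q q (n - k) * qBinom q n k = qPoch q q n := by
  induction n generalizing k with
  | zero => obtain rfl := Nat.le_zero.mp hk; simp [qBinom]
  | succ n ih =>
    cases k with
    | zero => simp [qBinom]
    | succ k =>
      rw [qBinom, Nat.add_sub_add_right, qPoch_succ q q k, qPoch_succ q q n]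
      obtain rfl | hkn := (Nat.lt_succ_iff.mp hk).eq_or_lt
      · have hkk := ih le_rfl
        rw [Nat.sub_self, qPoch_zero] at hkk
        rw [qBinom_eq_zero_of_lt q k.lt_succ_self, Nat.sub_self, pow_zero, qPoch_zero]
        linear_combination (1 - q * q ^ k) * hkk
      · obtain ⟨d, rfl⟩ := Nat.exists_eq_add_of_lt hkn
        have h₁ := ih hkn
        have h₂ := ih hkn.le
        rw [show k + d + 1 - (k + 1) = d by omega, qPoch_succ q q k] at h₁
        rw [show k + d + 1 - k = d + 1 by omega, qPoch_succ q q d] at h₂ ⊢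
        linear_combination (1 - q * q ^ d) * h₁ + q ^ (d + 1) * (1 - q * q ^ k) * h₂

lemma sum_qBinom_succ_mul (q : ℂ) (n : ℕ) (f : ℕ → ℂ) :
    ∑ m ∈ range (n + 2), qBinom q (n + 1) m * f m =
      ∑ m ∈ range (n + 1), qBinom q n m * (f m + q ^ (n - m) * f (m + 1)) := by
  have hshift : ∑ m ∈ range (n + 1), qBinom q n (m + 1) * f (m + 1) + qBinom q n 0 * f 0 =
      ∑ m ∈ range (n + 1), qBinom q n m * f m := by
    rw [← sum_range_succ' (fun m ↦ qBinom q n m * f m), sum_range_succ,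
      qBinom_eq_zero_of_lt q (Nat.lt_succ_self n), zero_mul, add_zero]
  calc ∑ m ∈ range (n + 2), qBinom q (n + 1) m * f m
      = ∑ m ∈ range (n + 1), qBinom q n (m + 1) * f (m + 1) + qBinom q n 0 * f 0
          + ∑ m ∈ range (n + 1), q ^ (n - m) * qBinom q n m * f (m + 1) := by
        simp only [sum_range_succ' _ (n + 1), qBinom, add_mul, sum_add_distrib]
        ring
    _ = ∑ m ∈ range (n + 1), qBinom q n m * (f m + q ^ (n - m) * f (m + 1)) := by
        rw [hshift, ← sum_add_distrib]
        exact sum_congr rfl fun m _ ↦ by ring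

lemma qPoch_mul_eq_sum (a b q : ℂ) (n : ℕ) :
    qPoch (a * b) q n =
      ∑ m ∈ range (n + 1), qBinom q n m * (b ^ m * qPoch a q m * qPoch b q (n - m)) := by
  induction n with
  | zero => simp [qBinom]
  | succ n ih =>
    have hterm : ∀ m ∈ range (n + 1),
        b ^ m * qPoch a q m * qPoch b q (n + 1 - m) +
            q ^ (n - m) * (b ^ (m + 1) * qPoch a q (m + 1) * qPoch b q (n + 1 - (m + 1))) =
          (1 - a * b * q ^ n) * (b ^ m * qPoch a q m * qPoch b q (n - m)) := by
      intro m hm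
      obtain ⟨d, rfl⟩ := Nat.exists_eq_add_of_le (Nat.lt_succ_iff.mp (mem_range.mp hm))
      rw [Nat.add_sub_add_right, Nat.add_sub_cancel_left, show m + d + 1 - m = d + 1 by omega,
        qPoch_succ b, qPoch_succ a]
      ring
    rw [sum_qBinom_succ_mul q n (fun m ↦ b ^ m * qPoch a q m * qPoch b q (n + 1 - m)),
      sum_congr rfl fun m hm ↦ congrArg (qBinom q n m * ·) (hterm m hm), qPoch_succ, ih,
      sum_mul]
    exact sum_congr rfl fun m _ ↦ by ring

theorem q_binomial_identity_general (q μ ν : ℂ) (n : ℕ)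
    (hμ : μ ≠ 0)
    (hqq : ∀ k ≤ n, qPoch q q k ≠ 0) :
    ∑ m ∈ Finset.range (n + 1),
      μ ^ m * qPoch (ν / μ) q m * qPoch μ q (n - m) *
        (qPoch q q n / (qPoch q q m * qPoch q q (n - m))) = qPoch ν q n := by
  have hbinom : ∀ m ∈ range (n + 1),
      qPoch q q n / (qPoch q q m * qPoch q q (n - m)) = qBinom q n m := by
    intro m hm
    have hmn := Nat.lt_succ_iff.mp (mem_range.mp hm)
    rw [div_eq_iff (mul_ne_zero (hqq m hmn) (hqq (n - m) (Nat.sub_le n m))),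
      ← qPoch_mul_qPoch_mul_qBinom q hmn]
    ring
  conv_rhs => rw [← div_mul_cancel₀ ν hμ, qPoch_mul_eq_sum]
  exact sum_congr rfl fun m hm ↦ by rw [hbinom m hm]; ring

/-- Three-parameter q-binomial identity:
`∑_{m=0}^{n} μ^m (ν/μ;q)_m (μ;q)_{n-m} [n choose m]_q = (ν;q)_n`. -/
theorem q_binomial_identity (q μ ν : ℂ) (n : ℕ)
    (hq : ‖q‖ < 1) (hμ : μ ≠ 0)
    (hqq : ∀ k ≤ n, qPoch q q k ≠ 0) :
    ∑ m ∈ Finset.range (n + 1),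
      μ ^ m * qPoch (ν / μ) q m * qPoch μ q (n - m) *
        (qPoch q q n / (qPoch q q m * qPoch q q (n - m))) = qPoch ν q n :=
  q_binomial_identity_general q μ ν n hμ hqq
end

section
/- Let A, B satisfy BA = αA² + βAB + γB². Define coefficients a_k^l by the normal-ordering expansion B^{l-1}A = ∑_{k=0}^{l} a_k^l A^{l-k} B^k. Then these coefficients satisfy the recursion a_j^{l+1} = (1 - α a_l^l)^{-1} ( α ∑_{k=j-1}^{l-1} a_k^l a_j^{k+1} + β a_{j-1}^l + δ_{j,l+1} γ ), with convention a_j^l = 0 for j < 0. -/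
open Finset

noncomputable def bb (α β γ : ℂ) : ℕ → ℤ → ℂ
  | 0, _ => 0
  | 1, j => if j = 0 then 1 else 0
  | (l+2), j =>
      if j < 0 ∨ ((l:ℤ)+2) < j then 0
      else (1 - α * bb α β γ (l+1) (l+1))⁻¹ *
        (α * ∑ k ∈ (Finset.Icc (j-1) ((l+1:ℤ)-1)).attach,
              bb α β γ (l+1) k.1 * bb α β γ (k.1.toNat+1) j
         + β * bb α β γ (l+1) (j-1) + if j = (l:ℤ)+2 then γ else 0)
  termination_by l => l
  decreasing_by
  all_goals try omega
  · have hk := k.2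
    simp only [Finset.mem_Icc] at hk
    have : k.1.toNat ≤ l := Int.toNat_le.mpr (by omega)
    omega

variable (α β γ : ℂ)

theorem bb_neg {j : ℤ} (hj : j < 0) (l : ℕ) : bb α β γ l j = 0 := by
  match l with
  | 0 => rw [bb]
  | 1 => rw [bb]; rw [if_neg (by omega)]
  | (l+2) => rw [bb]; rw [if_pos (Or.inl hj)]

theorem bb_gt {l : ℕ} {j : ℤ} (hj : (l:ℤ) < j) : bb α β γ l j = 0 := by
  match l with
  | 0 => rw [bb]
  | 1 => rw [bb]; rw [if_neg (by push_cast at hj; omega)]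
  | (l+2) => rw [bb]; rw [if_pos (Or.inr (by push_cast at hj ⊢; omega))]

theorem bb_succ (l : ℕ) (hl : 1 ≤ l) (j : ℤ) (hj0 : 0 ≤ j) (hj : j ≤ (l:ℤ) + 1) :
    bb α β γ (l+1) j = (1 - α * bb α β γ l l)⁻¹ *
      (α * ∑ k ∈ Finset.Icc (j-1) ((l:ℤ)-1), bb α β γ l k * bb α β γ (k.toNat+1) j
        + β * bb α β γ l (j-1) + if j = (l:ℤ)+1 then γ else 0) := by
  obtain ⟨m, rfl⟩ : ∃ m, l = m + 1 := ⟨l - 1, by omega⟩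
  rw [bb]
  rw [if_neg (by push_cast at hj ⊢; omega)]
  rw [Finset.sum_attach (Finset.Icc (j-1) ((m:ℤ)+1-1))
    (fun k => bb α β γ (m+1) k * bb α β γ (k.toNat+1) j)]
  push_cast
  ring_nf

variable (α β γ : ℂ)

theorem sum_convert (l : ℕ) (hl : 1 ≤ l) (j : ℤ) (hj0 : 0 ≤ j) :
    ∑ k ∈ Finset.range (l+1), bb α β γ l k * bb α β γ (k+1) j
      = (∑ k ∈ Finset.Icc (j-1) ((l:ℤ)-1), bb α β γ l k * bb α β γ (k.toNat+1) j)
        + bb α β γ l l * bb α β γ (l+1) j := by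
  rw [Finset.sum_range_succ]
  congr 1
  have h1 : ∑ k ∈ Finset.range l, bb α β γ l k * bb α β γ (k+1) j
      = ∑ k ∈ Finset.Icc (0:ℤ) ((l:ℤ)-1), bb α β γ l k * bb α β γ (k.toNat+1) j := by
    apply Finset.sum_nbij' (i := fun (k:ℕ) => (k:ℤ)) (j := fun (k:ℤ) => k.toNat)
    · intro k hk
      simp only [Finset.mem_range] at hk
      simp only [Finset.mem_Icc]
      omega
    · intro k hk
      simp only [Finset.mem_Icc] at hk
      simp only [Finset.mem_range]
      omega
    · intro k _; simp
    · intro k hk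
      simp only [Finset.mem_Icc] at hk
      omega
    · intro k _
      norm_num
  rw [h1]
  rcases eq_or_lt_of_le hj0 with h0 | h0
  · -- j = 0 : Icc (-1) (l-1) ⊇ Icc 0 (l-1)
    apply Finset.sum_subset
    · intro x hx
      simp only [Finset.mem_Icc] at hx ⊢
      omega
    · intro x hx hnx
      simp only [Finset.mem_Icc] at hx hnx
      have : x < 0 := by omega
      rw [bb_neg α β γ this, zero_mul]
  · -- 1 ≤ j : Icc (j-1) (l-1) ⊆ Icc 0 (l-1)
    symm
    apply Finset.sum_subset
    · intro x hx
      simp only [Finset.mem_Icc] at hx ⊢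
      omega
    · intro x hx hnx
      simp only [Finset.mem_Icc] at hx hnx
      have hx0 : 0 ≤ x := hx.1
      have : ((x.toNat + 1 : ℕ) : ℤ) < j := by omega
      rw [bb_gt α β γ this, mul_zero]

theorem bb_Q (l : ℕ) (hl : 1 ≤ l) (hD : 1 - α * bb α β γ l l ≠ 0) (j : ℤ) :
    bb α β γ (l+1) j = α * (∑ k ∈ Finset.range (l+1), bb α β γ l k * bb α β γ (k+1) j)
      + β * bb α β γ l (j-1) + (if j = (l:ℤ)+1 then γ else 0) := by
  rcases lt_or_ge j 0 with hj | hj0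
  · rw [bb_neg α β γ hj]
    rw [bb_neg α β γ (by omega : j - 1 < 0)]
    rw [if_neg (by omega)]
    have : ∀ k ∈ Finset.range (l+1), bb α β γ l k * bb α β γ (k+1) j = 0 := by
      intro k _; rw [bb_neg α β γ hj, mul_zero]
    rw [Finset.sum_eq_zero this]; ring
  rcases lt_or_ge ((l:ℤ)+1) j with hj | hjle
  · rw [bb_gt α β γ (by push_cast; omega)]
    rw [bb_gt α β γ (by omega : (l:ℤ) < j - 1)]
    rw [if_neg (by omega)]
    have : ∀ k ∈ Finset.range (l+1), bb α β γ l k * bb α β γ (k+1) j = 0 := by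
      intro k hk
      simp only [Finset.mem_range] at hk
      rw [bb_gt α β γ (show ((k+1:ℕ):ℤ) < j by push_cast; omega), mul_zero]
    rw [Finset.sum_eq_zero this]; ring
  · rw [sum_convert α β γ l hl j hj0, bb_succ α β γ l hl j hj0 hjle]
    set S1 := ∑ k ∈ Finset.Icc (j-1) ((l:ℤ)-1), bb α β γ l k * bb α β γ (k.toNat+1) j with hS1
    set b1 := bb α β γ l (j-1) with hb1
    set G := (if j = (l:ℤ)+1 then γ else 0) with hG
    set bll := bb α β γ l (l:ℤ) with hbll
    field_simp
    ring

open Finset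

abbrev V : Type := (ℕ × ℕ) →₀ ℂ

noncomputable def ee (p : ℕ × ℕ) : V := Finsupp.single p 1

noncomputable def opOf (r : ℕ × ℕ → V) : V →ₗ[ℂ] V :=
  Finsupp.lsum ℂ fun p => LinearMap.toSpanSingleton ℂ V (r p)

@[simp] lemma opOf_single (r : ℕ × ℕ → V) (p : ℕ × ℕ) : opOf r (ee p) = r p := by
  simp [opOf, ee, Finsupp.lsum_single, LinearMap.toSpanSingleton_apply]

variable (α β γ : ℂ)

theorem key_combo (n : ℕ) (hD : 1 - α * bb α β γ (n+1) (n+1) ≠ 0) (E : ℕ → V) :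
    ∑ j ∈ range (n+3), bb α β γ (n+2) j • E j
      = α • (∑ k ∈ range (n+2), bb α β γ (n+1) k • ∑ j ∈ range (k+2), bb α β γ (k+1) j • E j)
        + β • (∑ k ∈ range (n+2), bb α β γ (n+1) k • E (k+1))
        + γ • E (n+2) := by
  have hQ := bb_Q α β γ (n+1) (by omega) hD
  have hL : ∑ j ∈ range (n+3), bb α β γ (n+2) j • E j
      = ∑ j ∈ range (n+3),
          ((α * (∑ k ∈ range (n+2), bb α β γ (n+1) k * bb α β γ (k+1) j)) • E j
            + (β * bb α β γ (n+1) ((j:ℤ)-1)) • E j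
            + (if j = n+2 then γ else 0) • E j) := by
    refine Finset.sum_congr rfl fun j _ => ?_
    rw [hQ (j:ℤ), add_smul, add_smul]
    congr 2
    by_cases h : j = n + 2
    · subst h; rw [if_pos rfl, if_pos (by push_cast; ring)]
    · rw [if_neg h, if_neg (by push_cast; omega)]
  rw [hL, Finset.sum_add_distrib, Finset.sum_add_distrib]
  congr 1
  · congr 1
    · -- alpha part
      have h1 : ∀ k ∈ range (n+2),
          (α * bb α β γ (n+1) (k:ℤ)) • (∑ j ∈ range (k+2), bb α β γ (k+1) j • E j)
          = ∑ j ∈ range (n+3), (α * (bb α β γ (n+1) k * bb α β γ (k+1) j)) • E j := by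
        intro k hk
        simp only [mem_range] at hk
        rw [Finset.sum_subset (Finset.range_subset_range.mpr (by omega : k+2 ≤ n+3))
          (fun j hj hjn => by
            rw [bb_gt α β γ (show ((k+1:ℕ):ℤ) < (j:ℤ) by
              simp only [mem_range, not_lt] at hjn ⊢; push_cast; omega), zero_smul])]
        rw [Finset.smul_sum]
        refine Finset.sum_congr rfl fun j _ => ?_
        rw [smul_smul, mul_assoc]
      calc ∑ j ∈ range (n+3), (α * (∑ k ∈ range (n+2), bb α β γ (n+1) k * bb α β γ (k+1) j)) • E j
          = ∑ j ∈ range (n+3), ∑ k ∈ range (n+2), (α * (bb α β γ (n+1) k * bb α β γ (k+1) j)) • E j := by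
            refine Finset.sum_congr rfl fun j _ => ?_
            rw [Finset.mul_sum, Finset.sum_smul]
        _ = ∑ k ∈ range (n+2), ∑ j ∈ range (n+3), (α * (bb α β γ (n+1) k * bb α β γ (k+1) j)) • E j :=
            Finset.sum_comm
        _ = ∑ k ∈ range (n+2), (α * bb α β γ (n+1) (k:ℤ)) • (∑ j ∈ range (k+2), bb α β γ (k+1) j • E j) :=
            Finset.sum_congr rfl fun k hk => (h1 k hk).symm
        _ = α • ∑ k ∈ range (n+2), bb α β γ (n+1) (k:ℤ) • (∑ j ∈ range (k+2), bb α β γ (k+1) j • E j) := by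
            rw [Finset.smul_sum]
            exact Finset.sum_congr rfl fun k _ => (smul_smul α _ _).symm
    · -- beta part
      rw [show n+3 = (n+2)+1 from rfl, Finset.sum_range_succ']
      have h0 : (β * bb α β γ (n+1) (((0:ℕ):ℤ)-1)) • E 0 = 0 := by
        rw [bb_neg α β γ (by norm_num), mul_zero, zero_smul]
      rw [h0, add_zero, Finset.smul_sum]
      refine Finset.sum_congr rfl fun k _ => ?_
      rw [smul_smul]
      push_cast
      norm_num
  · -- gamma part
    have h2 : ∑ j ∈ range (n+3), (if j = n+2 then γ else 0) • E j
        = ∑ j ∈ range (n+3), (if j = n+2 then γ • E j else 0) :=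
      Finset.sum_congr rfl (fun j _ => by split_ifs <;> simp)
    rw [h2, Finset.sum_ite_eq' (range (n+3)) (n+2) (fun j => γ • E j)]
    rw [if_pos (by simp)]




/-- coefficient `F_j` at a degenerate level `L`. -/
noncomputable def Fc (L : ℕ) (j : ℕ) : ℂ :=
  α * (∑ k ∈ range L, bb α β γ L k * bb α β γ (k+1) j)
    + β * bb α β γ L ((j:ℤ)-1) + (if j = L+1 then γ else 0)

theorem swap_sum (m M : ℕ) (hmM : m + 1 ≤ M) (c : ℕ → ℂ) (E : ℕ → V) :
    ∑ k ∈ range m, c k • ∑ j ∈ range (k+2), bb α β γ (k+1) j • E j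
      = ∑ j ∈ range M, (∑ k ∈ range m, c k * bb α β γ (k+1) j) • E j := by
  have h1 : ∀ k ∈ range m,
      c k • ∑ j ∈ range (k+2), bb α β γ (k+1) j • E j
      = ∑ j ∈ range M, (c k * bb α β γ (k+1) j) • E j := by
    intro k hk
    simp only [mem_range] at hk
    rw [Finset.sum_subset (Finset.range_subset_range.mpr (by omega : k+2 ≤ M))
      (fun j hj hjn => by
        rw [bb_gt α β γ (show ((k+1:ℕ):ℤ) < (j:ℤ) by
          simp only [mem_range, not_lt] at hjn ⊢; push_cast; omega), zero_smul])]
    rw [Finset.smul_sum]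
    exact Finset.sum_congr rfl fun j _ => smul_smul _ _ _
  rw [Finset.sum_congr rfl h1, Finset.sum_comm]
  exact Finset.sum_congr rfl fun j _ => (Finset.sum_smul).symm

theorem shift_sum (m : ℕ) (c : ℤ → ℂ) (hc : c (-1) = 0) (E : ℕ → V) :
    ∑ k ∈ range m, c k • E (k+1) = ∑ j ∈ range (m+1), c ((j:ℤ)-1) • E j := by
  rw [Finset.sum_range_succ']
  have h0 : c (((0:ℕ):ℤ)-1) • E 0 = 0 := by
    norm_num [hc]
  rw [h0, add_zero]
  refine (Finset.sum_congr rfl fun k _ => ?_).symm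
  congr 2
  push_cast
  ring

theorem ite_sum (M t : ℕ) (ht : t < M) (E : ℕ → V) :
    ∑ j ∈ range M, (if j = t then γ else 0) • E j = γ • E t := by
  have h2 : ∑ j ∈ range M, (if j = t then γ else 0) • E j
      = ∑ j ∈ range M, (if j = t then γ • E j else 0) :=
    Finset.sum_congr rfl (fun j _ => by split_ifs <;> simp)
  rw [h2, Finset.sum_ite_eq' (range M) t (fun j => γ • E j), if_pos (by simp [ht])]

theorem key_combo_top (L : ℕ) (hL : 2 ≤ L) (hα : α * bb α β γ L L = 1)
    (E : ℕ → V) (f : V)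
    (hF : ∑ j ∈ range (L+2), Fc α β γ L j • E j = 0) :
    f = α • ((∑ k ∈ range L, bb α β γ L k • ∑ j ∈ range (k+2), bb α β γ (k+1) j • E j)
          + bb α β γ L L • f)
        + β • (∑ k ∈ range (L+1), bb α β γ L k • E (k+1))
        + γ • E (L+1) := by
  rw [smul_add, swap_sum α β γ L (L+2) (by omega) _ E,
    shift_sum (L+1) (fun t => bb α β γ L t) (bb_neg α β γ (by norm_num) L) E]
  rw [← ite_sum γ (L+2) (L+1) (by omega) E]
  rw [smul_smul, hα, one_smul]
  have hsplit : α • ∑ j ∈ range (L+2), (∑ k ∈ range L, bb α β γ L k * bb α β γ (k+1) j) • E j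
      + f + β • ∑ j ∈ range (L+2), bb α β γ L ((j:ℤ)-1) • E j
      + ∑ j ∈ range (L+2), (if j = L+1 then γ else 0) • E j
      = (∑ j ∈ range (L+2), Fc α β γ L j • E j) + f := by
    rw [Finset.smul_sum, Finset.smul_sum]
    have : ∀ j ∈ range (L+2), Fc α β γ L j • E j
        = α • ((∑ k ∈ range L, bb α β γ L k * bb α β γ (k+1) j) • E j)
          + β • (bb α β γ L ((j:ℤ)-1) • E j) + (if j = L+1 then γ else 0) • E j := by
      intro j _
      rw [Fc, add_smul, add_smul, smul_smul, smul_smul]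
    rw [Finset.sum_congr rfl this, Finset.sum_add_distrib, Finset.sum_add_distrib]
    abel
  calc f = (∑ j ∈ range (L+2), Fc α β γ L j • E j) + f := by rw [hF]; exact (zero_add f).symm
    _ = _ := by rw [← hsplit]

theorem bb_one (α β γ : ℂ) (j : ℤ) : bb α β γ 1 j = if j = 0 then 1 else 0 := by rw [bb]

section Model

variable (α β γ : ℂ)

/-- rule for right multiplication by `A` on normal monomials, truncated at degree `N`. -/
noncomputable def rA (N : ℕ) (p : ℕ × ℕ) : V :=
  if p.1 + p.2 + 1 ≤ N then
    ∑ k ∈ Finset.range (p.2+2), bb α β γ (p.2+1) k • ee (p.1+p.2+1-k, k)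
  else 0

/-- rule for right multiplication by `B`, truncated at degree `N`. -/
noncomputable def rB (N : ℕ) (p : ℕ × ℕ) : V :=
  if p.1 + p.2 + 1 ≤ N then ee (p.1, p.2+1) else 0

lemma opOf_sum_smul (r : ℕ × ℕ → V) (s : Finset ℕ) (c : ℕ → ℂ) (q : ℕ → ℕ × ℕ) :
    opOf r (∑ k ∈ s, c k • ee (q k)) = ∑ k ∈ s, c k • r (q k) := by
  rw [map_sum]
  exact Finset.sum_congr rfl fun k _ => by rw [map_smul, opOf_single]

lemma rA_apply (N m n : ℕ) : rA α β γ N (m,n)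
    = if m+n+1 ≤ N then ∑ k ∈ Finset.range (n+2), bb α β γ (n+1) k • ee (m+n+1-k, k) else 0 :=
  rfl

lemma rB_apply (N m n : ℕ) : rB N (m,n) = if m+n+1 ≤ N then ee (m, n+1) else 0 := rfl

theorem rel_main (N : ℕ) (hD : ∀ l', 1 ≤ l' → l' ≤ N - 1 → 1 - α * bb α β γ l' l' ≠ 0) :
    opOf (rA α β γ N) * opOf (rB N)
      = α • (opOf (rA α β γ N) * opOf (rA α β γ N))
        + β • (opOf (rB N) * opOf (rA α β γ N))
        + γ • (opOf (rB N) * opOf (rB N)) := by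
  apply Finsupp.lhom_ext
  intro p c
  have hsingle : (Finsupp.single p c : V) = c • ee p := by
    rw [ee, Finsupp.smul_single, smul_eq_mul, mul_one]
  rw [hsingle]
  simp only [map_smul]
  congr 1
  obtain ⟨m, n⟩ := p
  simp only [Module.End.mul_apply, LinearMap.add_apply, LinearMap.smul_apply]
  by_cases h2 : m + n + 2 ≤ N
  · -- active case
    have hB : opOf (rB N) (ee (m,n)) = ee (m, n+1) := by
      rw [opOf_single, rB_apply, if_pos (by omega)]
    have hA : opOf (rA α β γ N) (ee (m,n))
        = ∑ k ∈ Finset.range (n+2), bb α β γ (n+1) k • ee (m+n+1-k, k) := by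
      rw [opOf_single, rA_apply, if_pos (by omega)]
    rw [hB, hA]
    have hAB : opOf (rA α β γ N) (ee (m, n+1))
        = ∑ j ∈ Finset.range (n+3), bb α β γ (n+2) j • ee (m+n+2-j, j) := by
      rw [opOf_single, rA_apply, if_pos (by omega)]
      simp only [show n+1+1 = n+2 from by omega, show m+(n+1)+1 = m+n+2 from by omega,
        show n+1+2 = n+3 from by omega]
    have hAA : opOf (rA α β γ N) (∑ k ∈ Finset.range (n+2), bb α β γ (n+1) k • ee (m+n+1-k, k))
        = ∑ k ∈ Finset.range (n+2), bb α β γ (n+1) k •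
            ∑ j ∈ Finset.range (k+2), bb α β γ (k+1) j • ee (m+n+2-j, j) := by
      rw [opOf_sum_smul]
      refine Finset.sum_congr rfl fun k hk => ?_
      simp only [Finset.mem_range] at hk
      rw [rA_apply, if_pos (by omega)]
      simp only [show m+n+1-k+k+1 = m+n+2 from by omega]
    have hBA : opOf (rB N) (∑ k ∈ Finset.range (n+2), bb α β γ (n+1) k • ee (m+n+1-k, k))
        = ∑ k ∈ Finset.range (n+2), bb α β γ (n+1) k • ee (m+n+2-(k+1), k+1) := by
      rw [opOf_sum_smul]
      refine Finset.sum_congr rfl fun k hk => ?_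
      simp only [Finset.mem_range] at hk
      rw [rB_apply, if_pos (by omega)]
      simp only [show m+n+2-(k+1) = m+n+1-k from by omega]
    have hBB : opOf (rB N) (ee (m, n+1)) = ee (m+n+2-(n+2), n+2) := by
      rw [opOf_single, rB_apply, if_pos (by omega)]
      simp only [show m+n+2-(n+2) = m from by omega]
    rw [hAB, hAA, hBA, hBB]
    exact key_combo α β γ n (hD (n+1) (by omega) (by omega)) (fun j => ee (m+n+2-j, j))
  · -- dead case : everything vanishes
    by_cases h1 : m + n + 1 ≤ N
    · have hB : opOf (rB N) (ee (m,n)) = ee (m, n+1) := by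
        rw [opOf_single, rB_apply, if_pos (by omega)]
      have hA : opOf (rA α β γ N) (ee (m,n))
          = ∑ k ∈ Finset.range (n+2), bb α β γ (n+1) k • ee (m+n+1-k, k) := by
        rw [opOf_single, rA_apply, if_pos (by omega)]
      rw [hB, hA]
      have z1 : opOf (rA α β γ N) (ee (m, n+1)) = 0 := by
        rw [opOf_single, rA_apply, if_neg (by omega)]
      have z2 : opOf (rA α β γ N)
          (∑ k ∈ Finset.range (n+2), bb α β γ (n+1) k • ee (m+n+1-k, k)) = 0 := by
        rw [opOf_sum_smul]
        refine Finset.sum_eq_zero fun k hk => ?_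
        simp only [Finset.mem_range] at hk
        rw [rA_apply, if_neg (by omega), smul_zero]
      have z3 : opOf (rB N)
          (∑ k ∈ Finset.range (n+2), bb α β γ (n+1) k • ee (m+n+1-k, k)) = 0 := by
        rw [opOf_sum_smul]
        refine Finset.sum_eq_zero fun k hk => ?_
        simp only [Finset.mem_range] at hk
        rw [rB_apply, if_neg (by omega), smul_zero]
      have z4 : opOf (rB N) (ee (m, n+1)) = 0 := by
        rw [opOf_single, rB_apply, if_neg (by omega)]
      rw [z1, z2, z3, z4]
      simp
    · have hB : opOf (rB N) (ee (m,n)) = 0 := by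
        rw [opOf_single, rB_apply, if_neg (by omega)]
      have hA : opOf (rA α β γ N) (ee (m,n)) = 0 := by
        rw [opOf_single, rA_apply, if_neg (by omega)]
      rw [hB, hA]
      simp

lemma rB_pow (N : ℕ) : ∀ (t m n : ℕ), m + n + t ≤ N →
    ((opOf (rB N)) ^ t) (ee (m,n)) = ee (m, n+t)
  | 0, m, n, _ => by simp
  | (t+1), m, n, h => by
    rw [pow_succ, Module.End.mul_apply, opOf_single, rB_apply, if_pos (by omega)]
    rw [rB_pow N t m (n+1) (by omega), show n+1+t = n+(t+1) from by omega]

lemma rA_pow (N : ℕ) : ∀ (i m : ℕ), m + i ≤ N →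
    ((opOf (rA α β γ N)) ^ i) (ee (m,0)) = ee (m+i, 0)
  | 0, m, _ => by simp
  | (i+1), m, h => by
    rw [pow_succ, Module.End.mul_apply, opOf_single, rA_apply, if_pos (by omega)]
    have hv : ∑ k ∈ Finset.range (0+2), bb α β γ (0+1) k • ee (m+0+1-k, k) = ee (m+1, 0) := by
      rw [show (0:ℕ)+2 = 2 from rfl, Finset.sum_range_succ, Finset.sum_range_one]
      rw [show (0:ℕ)+1 = 1 from rfl, bb_one, bb_one]
      norm_num
    rw [hv, rA_pow N i (m+1) (by omega), show m+1+i = m+(i+1) from by omega]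

lemma extract (l' : ℕ) (c d : ℕ → ℂ)
    (h : ∑ k ∈ Finset.range (l'+1), c k • ee (l'-k, k)
        = ∑ k ∈ Finset.range (l'+1), d k • ee (l'-k, k)) :
    ∀ k, k ≤ l' → c k = d k := by
  intro k0 hk0
  have h2 := congrArg (fun v : V => v (l'-k0, k0)) h
  simp only [Finsupp.finset_sum_apply, Finsupp.smul_apply, ee, Finsupp.single_apply,
    smul_eq_mul] at h2
  have key : ∀ (e : ℕ → ℂ),
      (∑ k ∈ Finset.range (l'+1), e k * (if ((l'-k : ℕ), k) = (l'-k0, k0) then (1:ℂ) else 0))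
        = e k0 := by
    intro e
    rw [Finset.sum_eq_single k0]
    · rw [if_pos rfl, mul_one]
    · intro b _ hb
      rw [if_neg (fun hc => hb (congrArg Prod.snd hc)), mul_zero]
    · intro hmem
      exact absurd (Finset.mem_range.mpr (by omega)) hmem
  rwa [key c, key d] at h2

theorem pin (a : ℤ → ℕ → ℂ)
    (hexp : ∀ (R : Type) [Ring R] [Algebra ℂ R] (A B : R),
      B * A = α • (A * A) + β • (A * B) + γ • (B * B) →
      ∀ l : ℕ, 1 ≤ l →
        B ^ (l - 1) * A = ∑ k ∈ Finset.range (l + 1), a k l • (A ^ (l - k) * B ^ k))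
    (N : ℕ) (hD : ∀ l', 1 ≤ l' → l' ≤ N - 1 → 1 - α * bb α β γ l' l' ≠ 0)
    (l' : ℕ) (hl1 : 1 ≤ l') (hlN : l' ≤ N) : ∀ (k : ℕ), k ≤ l' →
    a k l' = bb α β γ l' k := by
  have hrel : (MulOpposite.op (opOf (rB N))) * (MulOpposite.op (opOf (rA α β γ N)))
      = α • (MulOpposite.op (opOf (rA α β γ N)) * MulOpposite.op (opOf (rA α β γ N)))
        + β • (MulOpposite.op (opOf (rA α β γ N)) * MulOpposite.op (opOf (rB N)))
        + γ • (MulOpposite.op (opOf (rB N)) * MulOpposite.op (opOf (rB N))) := by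
    rw [← MulOpposite.op_mul, ← MulOpposite.op_mul, ← MulOpposite.op_mul, ← MulOpposite.op_mul,
      ← MulOpposite.op_smul, ← MulOpposite.op_smul, ← MulOpposite.op_smul,
      ← MulOpposite.op_add, ← MulOpposite.op_add]
    exact congrArg MulOpposite.op (rel_main α β γ N hD)
  have h := hexp ((Module.End ℂ V)ᵐᵒᵖ) (MulOpposite.op (opOf (rA α β γ N)))
    (MulOpposite.op (opOf (rB N))) hrel l' hl1
  have h' := congrArg MulOpposite.unop h
  simp only [MulOpposite.unop_mul, MulOpposite.unop_pow, Finset.unop_sum,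
    MulOpposite.unop_smul, MulOpposite.unop_op] at h'
  have h2 := DFunLike.congr_fun h' (ee (0,0))
  simp only [Module.End.mul_apply, LinearMap.sum_apply, LinearMap.smul_apply] at h2
  rw [rB_pow N (l'-1) 0 0 (by omega)] at h2
  rw [opOf_single, rA_apply, if_pos (by omega)] at h2
  have hL : ∑ k ∈ Finset.range (0+(l'-1)+2), bb α β γ (0+(l'-1)+1) k • ee (0+(0+(l'-1))+1-k, k)
      = ∑ k ∈ Finset.range (l'+1), bb α β γ l' k • ee (l'-k, k) := by
    refine Finset.sum_congr (by congr 1; omega) fun k hk => ?_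
    simp only [Finset.mem_range] at hk
    rw [show 0+(l'-1)+1 = l' from by omega, show 0+(0+(l'-1))+1-k = l'-k from by omega]
  rw [hL] at h2
  have hR : ∀ k ∈ Finset.range (l'+1),
      ((opOf (rB N)) ^ k) (((opOf (rA α β γ N)) ^ (l'-k)) (ee (0,0))) = ee (l'-k, k) := by
    intro k hk
    simp only [Finset.mem_range] at hk
    rw [rA_pow α β γ N (l'-k) 0 (by omega)]
    rw [show (0:ℕ)+(l'-k) = l'-k from by omega]
    rw [rB_pow N k (l'-k) 0 (by omega)]
    norm_num
  have hRs : ∑ x ∈ Finset.range (l'+1),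
        a x l' • ((opOf (rB N) ^ x) ((opOf (rA α β γ N) ^ (l'-x)) (ee (0,0))))
      = ∑ x ∈ Finset.range (l'+1), a x l' • ee (l'-x, x) :=
    Finset.sum_congr rfl fun k hk => by rw [hR k hk]
  rw [hRs] at h2
  exact fun k hk => extract l' (fun k => a k l') (fun k => bb α β γ l' k) h2.symm k hk

end Model

section Degenerate

variable (α β γ : ℂ)

noncomputable def wvec (L : ℕ) : V :=
  ∑ j ∈ Finset.range (L+2), Fc α β γ L j • ee (L+1-j, j)

noncomputable def Sc (L : ℕ) : ℂ :=
  ∑ j ∈ Finset.range (L+2), Fc α β γ L j * (starRingEnd ℂ) (Fc α β γ L j)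

noncomputable def eps (L : ℕ) (j : ℕ) : V :=
  ee (L+1-j, j) - ((starRingEnd ℂ) (Fc α β γ L j) / Sc α β γ L) • wvec α β γ L

noncomputable def fvec (L : ℕ) : V := ee (L+2, 0)

lemma sum_F_eps (L : ℕ) :
    ∑ j ∈ Finset.range (L+2), Fc α β γ L j • eps α β γ L j = 0 := by
  by_cases hS : Sc α β γ L = 0
  · have hF0 : ∀ j ∈ Finset.range (L+2), Fc α β γ L j = 0 := by
      have h1 : Sc α β γ L = ((∑ j ∈ Finset.range (L+2), Complex.normSq (Fc α β γ L j) : ℝ) : ℂ) := by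
        rw [Sc, Complex.ofReal_sum]
        exact Finset.sum_congr rfl fun j _ => (Complex.mul_conj _)
      rw [h1, Complex.ofReal_eq_zero] at hS
      intro j hj
      have h2 := (Finset.sum_eq_zero_iff_of_nonneg
        (fun i _ => Complex.normSq_nonneg (Fc α β γ L i))).mp hS j hj
      exact Complex.normSq_eq_zero.mp h2
    exact Finset.sum_eq_zero fun j hj => by rw [hF0 j hj, zero_smul]
  · have hexp : ∀ j ∈ Finset.range (L+2), Fc α β γ L j • eps α β γ L j
        = Fc α β γ L j • ee (L+1-j, j)
          - ((Fc α β γ L j * (starRingEnd ℂ) (Fc α β γ L j)) / Sc α β γ L) • wvec α β γ L := by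
      intro j _
      rw [eps, smul_sub, smul_smul, mul_div_assoc]
    rw [Finset.sum_congr rfl hexp, Finset.sum_sub_distrib, ← Finset.sum_smul, ← Finset.sum_div]
    rw [← Sc, div_self hS, one_smul, ← wvec, sub_self]

noncomputable def rA' (L : ℕ) (p : ℕ × ℕ) : V :=
  if p.1 + p.2 + 1 ≤ L then ∑ k ∈ Finset.range (p.2+2), bb α β γ (p.2+1) k • ee (p.1+p.2+1-k, k)
  else if p.1 + p.2 = L then
    (if p.2 ≤ L-1 then ∑ j ∈ Finset.range (p.2+2), bb α β γ (p.2+1) j • eps α β γ L j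
     else fvec L)
  else 0

noncomputable def rB' (L : ℕ) (p : ℕ × ℕ) : V :=
  if p.1 + p.2 + 1 ≤ L then ee (p.1, p.2+1)
  else if p.1 + p.2 = L then eps α β γ L (p.2+1) else 0

lemma rA'_apply (L m n : ℕ) : rA' α β γ L (m,n)
    = if m + n + 1 ≤ L then ∑ k ∈ Finset.range (n+2), bb α β γ (n+1) k • ee (m+n+1-k, k)
      else if m + n = L then
        (if n ≤ L-1 then ∑ j ∈ Finset.range (n+2), bb α β γ (n+1) j • eps α β γ L j
         else fvec L)
      else 0 := rfl

lemma rB'_apply (L m n : ℕ) : rB' α β γ L (m,n)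
    = if m + n + 1 ≤ L then ee (m, n+1)
      else if m + n = L then eps α β γ L (n+1) else 0 := rfl

lemma rA'_dead (L : ℕ) {q : ℕ × ℕ} (h : L + 1 ≤ q.1 + q.2) : rA' α β γ L q = 0 := by
  obtain ⟨m, n⟩ := q
  rw [rA'_apply, if_neg (by simp at h ⊢; omega), if_neg (by simp at h ⊢; omega)]

lemma rB'_dead (L : ℕ) {q : ℕ × ℕ} (h : L + 1 ≤ q.1 + q.2) : rB' α β γ L q = 0 := by
  obtain ⟨m, n⟩ := q
  rw [rB'_apply, if_neg (by simp at h ⊢; omega), if_neg (by simp at h ⊢; omega)]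

lemma opOf_wvec (L : ℕ) (r : ℕ × ℕ → V) (hr : ∀ q : ℕ × ℕ, L + 1 ≤ q.1 + q.2 → r q = 0) :
    opOf r (wvec α β γ L) = 0 := by
  rw [wvec, map_sum]
  refine Finset.sum_eq_zero fun j _ => ?_
  rw [map_smul, opOf_single, hr _ (by simp; omega), smul_zero]

lemma opOf_eps (L : ℕ) (r : ℕ × ℕ → V) (hr : ∀ q : ℕ × ℕ, L + 1 ≤ q.1 + q.2 → r q = 0)
    (j : ℕ) : opOf r (eps α β γ L j) = 0 := by
  rw [eps, map_sub, map_smul, opOf_single, hr _ (by simp; omega),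
    opOf_wvec α β γ L r hr, smul_zero, sub_zero]

lemma opOf_fvec (L : ℕ) (r : ℕ × ℕ → V) (hr : ∀ q : ℕ × ℕ, L + 1 ≤ q.1 + q.2 → r q = 0) :
    opOf r (fvec L) = 0 := by
  rw [fvec, opOf_single, hr _ (by simp)]

theorem rel_deg (L : ℕ) (hL : 2 ≤ L)
    (hD : ∀ l', 1 ≤ l' → l' ≤ L - 1 → 1 - α * bb α β γ l' l' ≠ 0)
    (hdeg : α * bb α β γ L L = 1) :
    opOf (rA' α β γ L) * opOf (rB' α β γ L)
      = α • (opOf (rA' α β γ L) * opOf (rA' α β γ L))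
        + β • (opOf (rB' α β γ L) * opOf (rA' α β γ L))
        + γ • (opOf (rB' α β γ L) * opOf (rB' α β γ L)) := by
  apply Finsupp.lhom_ext
  intro p c
  have hsingle : (Finsupp.single p c : V) = c • ee p := by
    rw [ee, Finsupp.smul_single, smul_eq_mul, mul_one]
  rw [hsingle]
  simp only [map_smul]
  congr 1
  obtain ⟨m, n⟩ := p
  simp only [Module.End.mul_apply, LinearMap.add_apply, LinearMap.smul_apply]
  by_cases h2 : m + n + 2 ≤ L
  · -- plain case
    have hB : opOf (rB' α β γ L) (ee (m,n)) = ee (m, n+1) := by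
      rw [opOf_single, rB'_apply, if_pos (by omega)]
    have hA : opOf (rA' α β γ L) (ee (m,n))
        = ∑ k ∈ Finset.range (n+2), bb α β γ (n+1) k • ee (m+n+1-k, k) := by
      rw [opOf_single, rA'_apply, if_pos (by omega)]
    rw [hB, hA]
    have hAB : opOf (rA' α β γ L) (ee (m, n+1))
        = ∑ j ∈ Finset.range (n+3), bb α β γ (n+2) j • ee (m+n+2-j, j) := by
      rw [opOf_single, rA'_apply, if_pos (by omega)]
      simp only [show n+1+1 = n+2 from by omega, show m+(n+1)+1 = m+n+2 from by omega,
        show n+1+2 = n+3 from by omega]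
    have hAA : opOf (rA' α β γ L) (∑ k ∈ Finset.range (n+2), bb α β γ (n+1) k • ee (m+n+1-k, k))
        = ∑ k ∈ Finset.range (n+2), bb α β γ (n+1) k •
            ∑ j ∈ Finset.range (k+2), bb α β γ (k+1) j • ee (m+n+2-j, j) := by
      rw [opOf_sum_smul]
      refine Finset.sum_congr rfl fun k hk => ?_
      simp only [Finset.mem_range] at hk
      rw [rA'_apply, if_pos (by omega)]
      simp only [show m+n+1-k+k+1 = m+n+2 from by omega]
    have hBA : opOf (rB' α β γ L) (∑ k ∈ Finset.range (n+2), bb α β γ (n+1) k • ee (m+n+1-k, k))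
        = ∑ k ∈ Finset.range (n+2), bb α β γ (n+1) k • ee (m+n+2-(k+1), k+1) := by
      rw [opOf_sum_smul]
      refine Finset.sum_congr rfl fun k hk => ?_
      simp only [Finset.mem_range] at hk
      rw [rB'_apply, if_pos (by omega)]
      simp only [show m+n+2-(k+1) = m+n+1-k from by omega]
    have hBB : opOf (rB' α β γ L) (ee (m, n+1)) = ee (m+n+2-(n+2), n+2) := by
      rw [opOf_single, rB'_apply, if_pos (by omega)]
      simp only [show m+n+2-(n+2) = m from by omega]
    rw [hAB, hAA, hBA, hBB]
    exact key_combo α β γ n (hD (n+1) (by omega) (by omega)) (fun j => ee (m+n+2-j, j))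
  · by_cases h1 : m + n + 1 = L
    · -- boundary case : outputs at degree L+1
      have hB : opOf (rB' α β γ L) (ee (m,n)) = ee (m, n+1) := by
        rw [opOf_single, rB'_apply, if_pos (by omega)]
      have hA : opOf (rA' α β γ L) (ee (m,n))
          = ∑ k ∈ Finset.range (n+2), bb α β γ (n+1) k • ee (m+n+1-k, k) := by
        rw [opOf_single, rA'_apply, if_pos (by omega)]
      rw [hB, hA]
      have hBA : opOf (rB' α β γ L) (∑ k ∈ Finset.range (n+2), bb α β γ (n+1) k • ee (m+n+1-k, k))
          = ∑ k ∈ Finset.range (n+2), bb α β γ (n+1) k • eps α β γ L (k+1) := by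
        rw [opOf_sum_smul]
        refine Finset.sum_congr rfl fun k hk => ?_
        simp only [Finset.mem_range] at hk
        rw [rB'_apply, if_neg (by omega), if_pos (by omega)]
      have hBB : opOf (rB' α β γ L) (ee (m, n+1)) = eps α β γ L (n+2) := by
        rw [opOf_single, rB'_apply, if_neg (by omega), if_pos (by omega)]
      rw [hBA, hBB]
      by_cases hm : 1 ≤ m
      · -- n + 1 ≤ L - 1 : fully eps-valued, use key_combo
        have hAB : opOf (rA' α β γ L) (ee (m, n+1))
            = ∑ j ∈ Finset.range (n+3), bb α β γ (n+2) j • eps α β γ L j := by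
          rw [opOf_single, rA'_apply, if_neg (by omega), if_pos (by omega), if_pos (by omega)]
        have hAA : opOf (rA' α β γ L) (∑ k ∈ Finset.range (n+2), bb α β γ (n+1) k • ee (m+n+1-k, k))
            = ∑ k ∈ Finset.range (n+2), bb α β γ (n+1) k •
                ∑ j ∈ Finset.range (k+2), bb α β γ (k+1) j • eps α β γ L j := by
          rw [opOf_sum_smul]
          refine Finset.sum_congr rfl fun k hk => ?_
          simp only [Finset.mem_range] at hk
          rw [rA'_apply, if_neg (by omega), if_pos (by omega), if_pos (by omega)]
        rw [hAB, hAA]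
        exact key_combo α β γ n (hD (n+1) (by omega) (by omega)) (eps α β γ L)
      · -- m = 0, n = L-1 : the degenerate boundary component
        have hm0 : m = 0 := by omega
        have hn0 : n = L - 1 := by omega
        subst hm0
        have hAB : opOf (rA' α β γ L) (ee (0, n+1)) = fvec L := by
          rw [opOf_single, rA'_apply, if_neg (by omega), if_pos (by omega), if_neg (by omega)]
        have hAA : opOf (rA' α β γ L) (∑ k ∈ Finset.range (n+2), bb α β γ (n+1) k • ee (0+n+1-k, k))
            = (∑ k ∈ Finset.range (n+1), bb α β γ (n+1) k •
                ∑ j ∈ Finset.range (k+2), bb α β γ (k+1) j • eps α β γ L j)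
              + bb α β γ (n+1) ((n+1 : ℕ) : ℤ) • fvec L := by
          rw [opOf_sum_smul, Finset.sum_range_succ]
          congr 1
          · refine Finset.sum_congr rfl fun k hk => ?_
            simp only [Finset.mem_range] at hk
            rw [rA'_apply, if_neg (by omega), if_pos (by omega), if_pos (by omega)]
          · rw [rA'_apply, if_neg (by omega), if_pos (by omega), if_neg (by omega)]
        rw [hAB, hAA]
        obtain rfl : L = n + 1 := by omega
        have hkt := key_combo_top α β γ (n+1) hL hdeg (eps α β γ (n+1)) (fvec (n+1))
          (sum_F_eps α β γ (n+1))
        push_cast at hkt ⊢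
        exact hkt
    · -- dead case
      by_cases h0 : m + n ≤ L
      · -- m+n = L exactly (since m+n+1 > L)
        have hmn : m + n = L := by omega
        have hB : opOf (rB' α β γ L) (ee (m,n)) = eps α β γ L (n+1) := by
          rw [opOf_single, rB'_apply, if_neg (by omega), if_pos (by omega)]
        rw [hB]
        rw [opOf_eps α β γ L _ (fun q hq => rA'_dead α β γ L hq),
          opOf_eps α β γ L _ (fun q hq => rB'_dead α β γ L hq)]
        have hA : opOf (rA' α β γ L) (ee (m,n))
            = if n ≤ L-1 then ∑ j ∈ Finset.range (n+2), bb α β γ (n+1) j • eps α β γ L j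
              else fvec L := by
          rw [opOf_single, rA'_apply, if_neg (by omega), if_pos (by omega)]
        rw [hA]
        by_cases hn : n ≤ L - 1
        · rw [if_pos hn]
          have zA : opOf (rA' α β γ L)
              (∑ j ∈ Finset.range (n+2), bb α β γ (n+1) j • eps α β γ L j) = 0 := by
            rw [map_sum]
            refine Finset.sum_eq_zero fun j _ => ?_
            rw [map_smul, opOf_eps α β γ L _ (fun q hq => rA'_dead α β γ L hq), smul_zero]
          have zB : opOf (rB' α β γ L)
              (∑ j ∈ Finset.range (n+2), bb α β γ (n+1) j • eps α β γ L j) = 0 := by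
            rw [map_sum]
            refine Finset.sum_eq_zero fun j _ => ?_
            rw [map_smul, opOf_eps α β γ L _ (fun q hq => rB'_dead α β γ L hq), smul_zero]
          rw [zA, zB]
          simp
        · rw [if_neg hn]
          rw [opOf_fvec L _ (fun q hq => rA'_dead α β γ L hq),
            opOf_fvec L _ (fun q hq => rB'_dead α β γ L hq)]
          simp
      · -- m+n ≥ L+1
        have hB : opOf (rB' α β γ L) (ee (m,n)) = 0 := by
          rw [opOf_single]; exact rB'_dead α β γ L (by simp; omega)
        have hA : opOf (rA' α β γ L) (ee (m,n)) = 0 := by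
          rw [opOf_single]; exact rA'_dead α β γ L (by simp; omega)
        rw [hB, hA]
        simp

end Degenerate

section Absurd

variable (α β γ : ℂ)

lemma rB'_pow_plain (L : ℕ) : ∀ (t m n : ℕ), m + n + t ≤ L →
    ((opOf (rB' α β γ L)) ^ t) (ee (m,n)) = ee (m, n+t)
  | 0, m, n, _ => by simp
  | (t+1), m, n, h => by
    rw [pow_succ, Module.End.mul_apply, opOf_single, rB'_apply, if_pos (by omega)]
    rw [rB'_pow_plain L t m (n+1) (by omega), show n+1+t = n+(t+1) from by omega]

lemma rA'_pow_plain (L : ℕ) : ∀ (i m : ℕ), m + i ≤ L →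
    ((opOf (rA' α β γ L)) ^ i) (ee (m,0)) = ee (m+i, 0)
  | 0, m, _ => by simp
  | (i+1), m, h => by
    rw [pow_succ, Module.End.mul_apply, opOf_single, rA'_apply, if_pos (by omega)]
    have hv : ∑ k ∈ Finset.range (0+2), bb α β γ (0+1) k • ee (m+0+1-k, k) = ee (m+1, 0) := by
      rw [show (0:ℕ)+2 = 2 from rfl, Finset.sum_range_succ, Finset.sum_range_one]
      rw [show (0:ℕ)+1 = 1 from rfl, bb_one, bb_one]
      norm_num
    rw [hv, rA'_pow_plain L i (m+1) (by omega), show m+1+i = m+(i+1) from by omega]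

lemma Mk_eps (L : ℕ) (hL : 2 ≤ L) : ∀ k, k ≤ L+1 →
    ((opOf (rB' α β γ L)) ^ k) (((opOf (rA' α β γ L)) ^ (L+1-k)) (ee (0,0)))
      = eps α β γ L k := by
  intro k hk
  rcases Nat.eq_zero_or_pos k with rfl | hk1
  · rw [show L+1-0 = L+1 from rfl, pow_succ', Module.End.mul_apply,
      rA'_pow_plain α β γ L L 0 (by omega)]
    rw [pow_zero, Module.End.one_apply, opOf_single, rA'_apply,
      if_neg (by omega), if_pos (by omega), if_pos (by omega)]
    rw [show (0:ℕ)+2 = 2 from rfl, Finset.sum_range_succ, Finset.sum_range_one]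
    rw [show (0:ℕ)+1 = 1 from rfl, bb_one, bb_one]
    norm_num
  · obtain ⟨k', rfl⟩ : ∃ k', k = k'+1 := ⟨k-1, by omega⟩
    rw [rA'_pow_plain α β γ L (L+1-(k'+1)) 0 (by omega)]
    rw [pow_succ', Module.End.mul_apply]
    rw [rB'_pow_plain α β γ L k' (0+(L+1-(k'+1))) 0 (by omega)]
    rw [opOf_single, rB'_apply, if_neg (by omega), if_pos (by omega)]
    rw [show (0:ℕ)+k'+1 = k'+1 from by omega]

lemma eps_at (L k : ℕ) : (eps α β γ L k) (L+2, 0) = 0 := by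
  rw [eps, Finsupp.sub_apply, Finsupp.smul_apply]
  have h1 : (ee (L+1-k, k)) (L+2, 0) = 0 := by
    rw [ee, Finsupp.single_apply, if_neg (by simp [Prod.ext_iff]; omega)]
  have h2 : (wvec α β γ L) (L+2, 0) = 0 := by
    rw [wvec, Finsupp.finset_sum_apply]
    refine Finset.sum_eq_zero fun i _ => ?_
    rw [Finsupp.smul_apply, ee, Finsupp.single_apply, if_neg (by simp [Prod.ext_iff]; omega),
      smul_zero]
  rw [h1, h2, smul_zero, sub_zero]

theorem degenerate_absurd (a : ℤ → ℕ → ℂ)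
    (hexp : ∀ (R : Type) [Ring R] [Algebra ℂ R] (A B : R),
      B * A = α • (A * A) + β • (A * B) + γ • (B * B) →
      ∀ l : ℕ, 1 ≤ l →
        B ^ (l - 1) * A = ∑ k ∈ Finset.range (l + 1), a k l • (A ^ (l - k) * B ^ k))
    (L : ℕ) (hL : 2 ≤ L)
    (hD : ∀ l', 1 ≤ l' → l' ≤ L - 1 → 1 - α * bb α β γ l' l' ≠ 0)
    (hdeg : 1 - α * bb α β γ L L = 0) : False := by
  have hdeg' : α * bb α β γ L L = 1 := (sub_eq_zero.mp hdeg).symm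
  have hrel : (MulOpposite.op (opOf (rB' α β γ L))) * (MulOpposite.op (opOf (rA' α β γ L)))
      = α • (MulOpposite.op (opOf (rA' α β γ L)) * MulOpposite.op (opOf (rA' α β γ L)))
        + β • (MulOpposite.op (opOf (rA' α β γ L)) * MulOpposite.op (opOf (rB' α β γ L)))
        + γ • (MulOpposite.op (opOf (rB' α β γ L)) * MulOpposite.op (opOf (rB' α β γ L))) := by
    rw [← MulOpposite.op_mul, ← MulOpposite.op_mul, ← MulOpposite.op_mul, ← MulOpposite.op_mul,
      ← MulOpposite.op_smul, ← MulOpposite.op_smul, ← MulOpposite.op_smul,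
      ← MulOpposite.op_add, ← MulOpposite.op_add]
    exact congrArg MulOpposite.op (rel_deg α β γ L hL hD hdeg')
  have h := hexp ((Module.End ℂ V)ᵐᵒᵖ) (MulOpposite.op (opOf (rA' α β γ L)))
    (MulOpposite.op (opOf (rB' α β γ L))) hrel (L+1) (by omega)
  have h' := congrArg MulOpposite.unop h
  simp only [MulOpposite.unop_mul, MulOpposite.unop_pow, Finset.unop_sum,
    MulOpposite.unop_smul, MulOpposite.unop_op] at h'
  have h2 := DFunLike.congr_fun h' (ee (0,0))
  simp only [Module.End.mul_apply, LinearMap.sum_apply, LinearMap.smul_apply] at h2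
  rw [show (L+1)-1 = L from by omega] at h2
  rw [rB'_pow_plain α β γ L L 0 0 (by omega)] at h2
  rw [opOf_single, rA'_apply, if_neg (by omega), if_pos (by omega), if_neg (by omega)] at h2
  have hRs : ∑ x ∈ Finset.range (L+1+1),
        a x (L+1) • ((opOf (rB' α β γ L) ^ x) ((opOf (rA' α β γ L) ^ (L+1-x)) (ee (0,0))))
      = ∑ x ∈ Finset.range (L+1+1), a x (L+1) • eps α β γ L x := by
    refine Finset.sum_congr rfl fun k hk => ?_
    simp only [Finset.mem_range] at hk
    rw [Mk_eps α β γ L hL k (by omega)]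
  rw [hRs] at h2
  have h3 := congrArg (fun v : V => v (L+2, 0)) h2
  simp only [Finsupp.finset_sum_apply, Finsupp.smul_apply] at h3
  rw [Finset.sum_eq_zero (fun k _ => by rw [eps_at α β γ L k, smul_zero])] at h3
  rw [fvec, ee, Finsupp.single_apply, if_pos rfl] at h3
  exact one_ne_zero h3

theorem noDegen (a : ℤ → ℕ → ℂ)
    (hexp : ∀ (R : Type) [Ring R] [Algebra ℂ R] (A B : R),
      B * A = α • (A * A) + β • (A * B) + γ • (B * B) →
      ∀ l : ℕ, 1 ≤ l →
        B ^ (l - 1) * A = ∑ k ∈ Finset.range (l + 1), a k l • (A ^ (l - k) * B ^ k)) :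
    ∀ n, 1 ≤ n → 1 - α * bb α β γ n n ≠ 0 := by
  intro n
  induction n using Nat.strong_induction_on with
  | _ n IH =>
    intro hn1 hc
    rcases Nat.lt_or_ge n 2 with hs | hs
    · have hn : n = 1 := by omega
      subst hn
      rw [bb_one] at hc
      norm_num at hc
    · exact degenerate_absurd α β γ a hexp n hs (fun m h1 h2 => IH m (by omega) h1) hc

end Absurd

/-- Recursion for the normal-ordering coefficients: if `a j l` are the (universal)
coefficients of the normal-ordering expansion `B^{l-1} A = ∑_{k=0}^{l} a_k^l A^{l-k} B^k`
valid in every ℂ-algebra whose generators satisfy `BA = αA² + βAB + γB²`, with the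
convention `a_j^l = 0` for `j < 0`, then
`a_j^{l+1} = (1 - α a_l^l)⁻¹ (α ∑_{k=j-1}^{l-1} a_k^l a_j^{k+1} + β a_{j-1}^l + δ_{j,l+1} γ)`. -/
theorem normal_ordering_recursion (α β γ : ℂ) (a : ℤ → ℕ → ℂ)
    (hneg : ∀ j : ℤ, j < 0 → ∀ l : ℕ, a j l = 0)
    (hexp : ∀ (R : Type) [Ring R] [Algebra ℂ R] (A B : R),
      B * A = α • (A * A) + β • (A * B) + γ • (B * B) →
      ∀ l : ℕ, 1 ≤ l →
        B ^ (l - 1) * A = ∑ k ∈ Finset.range (l + 1), a k l • (A ^ (l - k) * B ^ k))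
    (l : ℕ) (hl : 1 ≤ l) (hden : 1 - α * a l l ≠ 0)
    (j : ℤ) (hj0 : 0 ≤ j) (hj : j ≤ (l : ℤ) + 1) :
    a j (l + 1) = (1 - α * a l l)⁻¹ *
      (α * ∑ k ∈ Finset.Icc (j - 1) ((l : ℤ) - 1), a k l * a j (k.toNat + 1)
        + β * a (j - 1) l + (if j = (l : ℤ) + 1 then γ else 0)) := by
  have hDall : ∀ n, 1 ≤ n → 1 - α * bb α β γ n n ≠ 0 := noDegen α β γ a hexp
  have hpinZ : ∀ l' : ℕ, 1 ≤ l' → ∀ t : ℤ, 0 ≤ t → t ≤ (l' : ℤ) → a t l' = bb α β γ l' t := by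
    intro l' h1 t ht0 htl
    have := pin α β γ a hexp l' (fun m hm1 _ => hDall m hm1) l' h1 le_rfl t.toNat (by omega)
    rwa [Int.toNat_of_nonneg ht0] at this
  have hmain : a j (l+1) = bb α β γ (l+1) j :=
    hpinZ (l+1) (by omega) j hj0 (by push_cast; omega)
  rw [hmain, bb_succ α β γ l hl j hj0 hj]
  have e1 : bb α β γ l ((l:ℕ):ℤ) = a l l := (hpinZ l hl l (by positivity) le_rfl).symm
  have e2 : bb α β γ l (j-1) = a (j-1) l := by
    rcases lt_or_ge (j-1) 0 with h | h
    · rw [bb_neg α β γ h, hneg _ h l]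
    · exact (hpinZ l hl (j-1) h (by omega)).symm
  have e3 : ∑ k ∈ Finset.Icc (j-1) ((l:ℤ)-1), bb α β γ l k * bb α β γ (k.toNat+1) j
      = ∑ k ∈ Finset.Icc (j-1) ((l:ℤ)-1), a k l * a j (k.toNat+1) := by
    refine Finset.sum_congr rfl fun k hk => ?_
    simp only [Finset.mem_Icc] at hk
    rcases lt_or_ge k 0 with h | h
    · rw [bb_neg α β γ h, hneg k h l, zero_mul, zero_mul]
    · have f1 : bb α β γ l k = a k l := (hpinZ l hl k h (by omega)).symm
      have f2 : bb α β γ (k.toNat+1) j = a j (k.toNat+1) := by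
        refine (hpinZ (k.toNat+1) (by omega) j hj0 ?_).symm
        push_cast
        omega
      rw [f1, f2]
  rw [e1, e2, e3]
end

section
/- Under the Möbius substitution z = (1 - νu)/(1 - u), the ASEP-type scattering factor S(z_i, z_j) = -(α + βz_i + γz_i z_j - z_i)/(α + βz_j + γz_i z_j - z_j) with α = ν(1-q)/(1-qν), β = (q-ν)/(1-qν), γ = (1-q)/(1-qν) transforms into S(u_i, u_j) = (q u_j - u_i)/(u_j - q u_i). -/
/-!
Both the numerator and the denominator of `S(z_i, z_j)` are instances of
`α + β y + γ x y - x`. Since `z - ν = (1 - ν) / (1 - u)`, the constant terms cancel and this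
expression equals `(1 - ν)² / ((1 - qν)(1 - u_x)(1 - u_y)) · (u_y - q u_x)`. Numerator and
denominator therefore share this prefactor, which is nonzero because the denominator is.
-/

theorem moebius_scattering_term {K : Type*} [Field K] {q ν u v x y : K}
    (hqν : 1 - q * ν ≠ 0) (hu : u ≠ 1) (hv : v ≠ 1)
    (hx : x = (1 - ν * u) / (1 - u)) (hy : y = (1 - ν * v) / (1 - v)) :
    ν * (1 - q) / (1 - q * ν) + ((q - ν) / (1 - q * ν)) * y
        + ((1 - q) / (1 - q * ν)) * x * y - x
      = (1 - ν) ^ 2 / ((1 - q * ν) * (1 - u) * (1 - v)) * (v - q * u) := by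
  have hu' : 1 - u ≠ 0 := sub_ne_zero.mpr hu.symm
  have hv' : 1 - v ≠ 0 := sub_ne_zero.mpr hv.symm
  have hνq : 1 - ν * q ≠ 0 := by rwa [mul_comm]
  subst hx hy
  field_simp
  ring

theorem smatrix_transformation_general (q ν ui uj zi zj : ℂ) (hqν : 1 - q * ν ≠ 0)
    (hui : ui ≠ 1) (huj : uj ≠ 1)
    (hzi : zi = (1 - ν * ui) / (1 - ui)) (hzj : zj = (1 - ν * uj) / (1 - uj))
    (hden : ν * (1 - q) / (1 - q * ν) + ((q - ν) / (1 - q * ν)) * zj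
        + ((1 - q) / (1 - q * ν)) * zi * zj - zi ≠ 0) :
    -(ν * (1 - q) / (1 - q * ν) + ((q - ν) / (1 - q * ν)) * zi
        + ((1 - q) / (1 - q * ν)) * zi * zj - zj) /
      (ν * (1 - q) / (1 - q * ν) + ((q - ν) / (1 - q * ν)) * zj
        + ((1 - q) / (1 - q * ν)) * zi * zj - zi)
    = (q * uj - ui) / (uj - q * ui) := by
  have hden_eq := moebius_scattering_term hqν hui huj hzi hzj
  have hnum_eq := moebius_scattering_term hqν huj hui hzj hzi
  rw [mul_right_comm _ zj zi, mul_right_comm _ (1 - uj) (1 - ui)] at hnum_eq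
  have hfactor := left_ne_zero_of_mul (hden_eq ▸ hden)
  rw [hnum_eq, hden_eq, ← mul_neg, mul_div_mul_left _ _ hfactor, neg_sub]

/-- Under the Möbius substitution `z = (1-νu)/(1-u)`, the ASEP-type scattering factor
`S(z_i,z_j) = -(α + βz_i + γz_iz_j - z_j)/(α + βz_j + γz_iz_j - z_i)` with
`α = ν(1-q)/(1-qν)`, `β = (q-ν)/(1-qν)`, `γ = (1-q)/(1-qν)` transforms into
`S(u_i,u_j) = (q u_j - u_i)/(u_j - q u_i)`. -/
theorem smatrix_transformation (q ν ui uj zi zj : ℂ) (hqν : 1 - q * ν ≠ 0)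
    (hui : ui ≠ 1) (huj : uj ≠ 1)
    (hzi : zi = (1 - ν * ui) / (1 - ui)) (hzj : zj = (1 - ν * uj) / (1 - uj))
    (hden : ν * (1 - q) / (1 - q * ν) + ((q - ν) / (1 - q * ν)) * zj
        + ((1 - q) / (1 - q * ν)) * zi * zj - zi ≠ 0)
    (hdenu : uj - q * ui ≠ 0) :
    -(ν * (1 - q) / (1 - q * ν) + ((q - ν) / (1 - q * ν)) * zi
        + ((1 - q) / (1 - q * ν)) * zi * zj - zj) /
      (ν * (1 - q) / (1 - q * ν) + ((q - ν) / (1 - q * ν)) * zj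
        + ((1 - q) / (1 - q * ν)) * zi * zj - zi)
    = (q * uj - ui) / (uj - q * ui) :=
  smatrix_transformation_general q ν ui uj zi zj hqν hui huj hzi hzj hden
end

section
/- For hopping probabilities of the form φ(m|n) = v(m)w(n-m)/f(n) with f(n) = ∑_{k=0}^{n} v(k)w(n-k), the single-site stationary weights f satisfy the detailed factorization property: for any configuration n = (n_i) on a finite ring with transitions determined by jump numbers m_i ≥ 0 (n_i - m_i = n_i' - m_{i-1}), the transition probability satisfies M_{n,n'} · ∏_i f(n_i) = M^T-type weight ∏_i v(m_i) w(n_i - m_i); consequently the product measure P_st(n) = ∏_i f(n_i) is stationary: ∑_{n'} M_{n,n'} P_st(n') = P_st(n). -/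
/-- For the zero-range chipping model on the ring `ℤ/Lℤ` with hopping probabilities
`φ(m|n) = v(m)w(n-m)/f(n)`, `f(n) = ∑_{k=0}^n v(k)w(n-k)`:
(i) the transition weights satisfy `(∏ᵢ φ(mᵢ|n'ᵢ))·∏ᵢ f(n'ᵢ) = ∏ᵢ v(mᵢ)w(n'ᵢ-mᵢ)`, and
(ii) the product measure `P_st(n) = ∏ᵢ f(nᵢ)` is stationary: summing the transition
probabilities into configuration `n` (parameterized by the jump numbers `m`, with source
configuration `n'ᵢ = nᵢ + mᵢ - mᵢ₋₁`) against `P_st` returns `P_st(n)`. -/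
theorem product_measure_stationary (L : ℕ) [NeZero L] (v w : ℕ → ℝ)
    (hv0 : v 0 = 1) (hw0 : w 0 = 1) (hv : ∀ k, 0 ≤ v k) (hw : ∀ k, 0 ≤ w k)
    (f : ℕ → ℝ) (hf : ∀ k, f k = ∑ j ∈ Finset.range (k + 1), v j * w (k - j))
    (hfpos : ∀ k, 0 < f k)
    (φ : ℕ → ℕ → ℝ) (hφ : ∀ m k, φ m k = v m * w (k - m) / f k)
    (n : ZMod L → ℕ) :
    (∀ (n' m : ZMod L → ℕ), (∀ i, m i ≤ n' i) →
        (∏ i, φ (m i) (n' i)) * ∏ i, f (n' i) = ∏ i, v (m i) * w (n' i - m i))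
    ∧ ∑ m : ZMod L → Fin ((∑ i, n i) + 1),
        ∏ i : ZMod L,
          (if (m (i - 1) : ℕ) ≤ n i
            then φ (m i : ℕ) (n i + (m i : ℕ) - (m (i - 1) : ℕ)) *
              f (n i + (m i : ℕ) - (m (i - 1) : ℕ))
            else 0)
      = ∏ i, f (n i) := by
  have key : ∀ m k : ℕ, φ m k * f k = v m * w (k - m) := by
    intro m k
    rw [hφ, div_mul_cancel₀ _ (ne_of_gt (hfpos k))]
  constructor
  · intro n' m _
    rw [← Finset.prod_mul_distrib]
    exact Finset.prod_congr rfl fun i _ => key _ _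
  · have hle : ∀ j, n j ≤ ∑ i, n i := fun j =>
      Finset.single_le_sum (fun i _ => Nat.zero_le _) (Finset.mem_univ j)
    set N := (∑ i, n i) + 1 with hN
    -- g i a : weight contributed at site i by incoming jump a
    set g : ZMod L → ℕ → ℝ := fun i a => if a ≤ n i then w (n i - a) else 0 with hg
    have step1 : ∀ (m : ZMod L → Fin N) (i : ZMod L),
        (if (m (i - 1) : ℕ) ≤ n i
            then φ (m i : ℕ) (n i + (m i : ℕ) - (m (i - 1) : ℕ)) *
              f (n i + (m i : ℕ) - (m (i - 1) : ℕ))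
            else 0)
        = v (m i) * g i (m (i - 1)) := by
      intro m i
      simp only [hg]
      by_cases h : (m (i - 1) : ℕ) ≤ n i
      · simp only [h, if_true]
        rw [key]
        congr 2
        omega
      · simp [h]
    have step2 : ∀ (m : ZMod L → Fin N),
        (∏ i, v (m i) * g i (m (i - 1))) = ∏ i, v (m i) * g (i + 1) (m i) := by
      intro m
      rw [Finset.prod_mul_distrib, Finset.prod_mul_distrib]
      congr 1
      exact (Fintype.prod_equiv (Equiv.addRight (1 : ZMod L))
        (fun i => g (i + 1) (m i)) (fun i => g i (m (i - 1)))
        (fun i => by simp)).symm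
    have step3 : ∀ i : ZMod L, (∑ k : Fin N, v k * g (i + 1) k) = f (n (i + 1)) := by
      intro i
      rw [Fin.sum_univ_eq_sum_range (fun k => v k * g (i + 1) k) N, hf]
      rw [← Finset.sum_subset (Finset.range_subset_range.2 (by have := hle (i+1); omega : n (i+1) + 1 ≤ N))]
      · refine Finset.sum_congr rfl fun k hk => ?_
        simp only [hg]
        rw [if_pos (by simpa using Nat.lt_succ_iff.mp (Finset.mem_range.mp hk))]
      · intro k _ hk
        simp only [hg]
        rw [if_neg (fun h => hk (Finset.mem_range.mpr (Nat.lt_succ_of_le h)))]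
        ring
    calc ∑ m : ZMod L → Fin N, ∏ i : ZMod L,
          (if (m (i - 1) : ℕ) ≤ n i
            then φ (m i : ℕ) (n i + (m i : ℕ) - (m (i - 1) : ℕ)) *
              f (n i + (m i : ℕ) - (m (i - 1) : ℕ))
            else 0)
        = ∑ m : ZMod L → Fin N, ∏ i, v (m i) * g (i + 1) (m i) := by
          refine Finset.sum_congr rfl fun m _ => ?_
          rw [Finset.prod_congr rfl fun i _ => step1 m i, step2]
      _ = ∏ i : ZMod L, ∑ k : Fin N, v k * g (i + 1) k := by
          rw [Finset.prod_univ_sum]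
          rw [Fintype.piFinset_univ]
      _ = ∏ i : ZMod L, f (n (i + 1)) := Finset.prod_congr rfl fun i _ => step3 i
      _ = ∏ i, f (n i) := Fintype.prod_equiv (Equiv.addRight (1 : ZMod L))
            (fun i => f (n (i + 1))) (fun i => f (n i)) (fun i => rfl)
end

section
/- For two particles (N = 2) on ℤ, the Bethe function Ψ(x₁,x₂) = z₁^{x₁} z₂^{x₂} + S(z₁,z₂) z₂^{x₁} z₁^{x₂}, with S(z₁,z₂) = -(α + βz₁ + γz₁z₂ - z₁)/(α + βz₂ + γz₁z₂ - z₂), satisfies the boundary condition Ψ(x, x-1) = α Ψ(x-1,x-1) + β Ψ(x-1,x) + γ Ψ(x,x) for all x ∈ ℤ. -/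
/-! Every plane wave `z₁^a z₂^b` violates the boundary condition on the diagonal only by a
multiple of `(z₁ z₂)^(x-1)`, with a factor `z₁ - (α + β z₂ + γ z₁ z₂)` that does not depend
on `x`. The defect is linear in the wave function, so the two waves of the Bethe ansatz
(the second one with `z₁, z₂` swapped) cancel exactly when `S` is the ratio of these
factors. -/

variable {K : Type*} [Field K]

def boundaryDefect (α β γ : K) (f : ℤ → ℤ → K) (x : ℤ) : K :=
  f x (x - 1) - (α * f (x - 1) (x - 1) + β * f (x - 1) x + γ * f x x)

theorem boundaryDefect_add_mul (α β γ c : K) (f g : ℤ → ℤ → K) (x : ℤ) :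
    boundaryDefect α β γ (fun a b => f a b + c * g a b) x =
      boundaryDefect α β γ f x + c * boundaryDefect α β γ g x := by
  simp only [boundaryDefect]
  ring

theorem boundaryDefect_planeWave (α β γ : K) {z₁ z₂ : K} (hz₁ : z₁ ≠ 0) (hz₂ : z₂ ≠ 0)
    (x : ℤ) :
    boundaryDefect α β γ (fun a b => z₁ ^ a * z₂ ^ b) x =
      (z₁ * z₂) ^ (x - 1) * (z₁ - (α + β * z₂ + γ * z₁ * z₂)) := by
  have zpow_eq {z : K} (hz : z ≠ 0) : z ^ x = z ^ (x - 1) * z := by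
    rw [← zpow_add_one₀ hz, sub_add_cancel]
  simp only [boundaryDefect]
  rw [zpow_eq hz₁, zpow_eq hz₂, mul_zpow]
  ring

theorem two_particle_boundary_condition_general (α β γ z₁ z₂ : ℂ)
    (hz₁ : z₁ ≠ 0) (hz₂ : z₂ ≠ 0)
    (hden : α + β * z₁ + γ * z₁ * z₂ - z₂ ≠ 0)
    (S : ℂ) (hS : S = -(α + β * z₂ + γ * z₁ * z₂ - z₁) / (α + β * z₁ + γ * z₁ * z₂ - z₂))
    (Ψ : ℤ → ℤ → ℂ) (hΨ : ∀ x₁ x₂ : ℤ, Ψ x₁ x₂ = z₁ ^ x₁ * z₂ ^ x₂ + S * (z₂ ^ x₁ * z₁ ^ x₂))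
    (x : ℤ) :
    Ψ x (x - 1) = α * Ψ (x - 1) (x - 1) + β * Ψ (x - 1) x + γ * Ψ x x := by
  have hS_mul : S * (α + β * z₁ + γ * z₁ * z₂ - z₂) = -(α + β * z₂ + γ * z₁ * z₂ - z₁) := by
    rw [hS, div_mul_cancel₀ _ hden]
  rw [← sub_eq_zero]
  change boundaryDefect α β γ Ψ x = 0
  rw [funext₂ hΨ, boundaryDefect_add_mul, boundaryDefect_planeWave α β γ hz₁ hz₂,
    boundaryDefect_planeWave α β γ hz₂ hz₁, mul_comm z₂ z₁]
  linear_combination -(z₁ * z₂) ^ (x - 1) * hS_mul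

/-- For two particles on `ℤ`, the Bethe function
`Ψ(x₁,x₂) = z₁^{x₁} z₂^{x₂} + S(z₁,z₂) z₂^{x₁} z₁^{x₂}` with scattering amplitude
`S(z₁,z₂) = -(α + βz₂ + γz₁z₂ - z₁)/(α + βz₁ + γz₁z₂ - z₂)` satisfies the boundary
condition `Ψ(x,x-1) = αΨ(x-1,x-1) + βΨ(x-1,x) + γΨ(x,x)` for all `x ∈ ℤ`. -/
theorem two_particle_boundary_condition (α β γ z₁ z₂ : ℂ)
    (hsum : α + β + γ = 1) (hz₁ : z₁ ≠ 0) (hz₂ : z₂ ≠ 0)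
    (hden : α + β * z₁ + γ * z₁ * z₂ - z₂ ≠ 0)
    (S : ℂ) (hS : S = -(α + β * z₂ + γ * z₁ * z₂ - z₁) / (α + β * z₁ + γ * z₁ * z₂ - z₂))
    (Ψ : ℤ → ℤ → ℂ) (hΨ : ∀ x₁ x₂ : ℤ, Ψ x₁ x₂ = z₁ ^ x₁ * z₂ ^ x₂ + S * (z₂ ^ x₁ * z₁ ^ x₂))
    (x : ℤ) :
    Ψ x (x - 1) = α * Ψ (x - 1) (x - 1) + β * Ψ (x - 1) x + γ * Ψ x x :=
  two_particle_boundary_condition_general α β γ z₁ z₂ hz₁ hz₂ hden S hS Ψ hΨ x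
end
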